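/- arXiv:1402.6544 — 2 statements merged into one kernel-verified Lean document; each statement's English description precedes it below -/
import Mathlib

section
/- Under the hypotheses of the noisy monotonicity lemma, the stopping index n_δ defined as the first integer n with αₙ⟨(αₙI+AA*)^{-1}(Axₙ^δ - y^δ), Axₙ^δ - y^δ⟩ ≤ τ²δ² is finite, and satisfies the a priori estimate c₃ δ² ∑_{n=0}^{n_δ - 1} 1/αₙ ≤ D_{ξ₀}Θ(x̂, x₀), where c₃ = (1 - 1/τ - μ₀/(4c₀)) min{μ₀, μ₁} τ² and x̂ is any solution of Ax = y in dom(Θ). -/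
open scoped InnerProductSpace
open ContinuousLinearMap

/-!
Write `Dₙ = D_{ξₙ}Θ(x̂, xₙ)` and `rₙ = A xₙ - yδ`; the resolvent `(αₙI + AA*)⁻¹` is `Bₙ ∘ Bₙ`,
`Bₙ` being a right inverse of the square root `Sₙ`. As long as the discrepancy
`αₙ⟪(αₙI + AA*)⁻¹rₙ, rₙ⟫` exceeds `τ²δ²`, the three-point identity, strong convexity of `Θ` and
Young's inequality give `Dₙ - Dₙ₊₁ ≥ c₃δ²/αₙ`. Summing telescopes to the estimate, and since
`1/αₙ ≥ 1/α₀` the left side would be unbounded if the discrepancy principle never stopped.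
-/

section Bregman

variable {X : Type*} [NormedAddCommGroup X] [InnerProductSpace ℝ X]

/-- `ζ ∈ ∂Θ(x)`, in the form `x ∈ argmin (Θ - ⟪ζ, ·⟫)`. -/
def IsSubgradient (Θ : X → EReal) (ζ x : X) : Prop :=
  ∀ z, Θ x - ((⟪ζ, x⟫_ℝ : ℝ) : EReal) ≤ Θ z - ((⟪ζ, z⟫_ℝ : ℝ) : EReal)

def StronglyConvexWith (Θ : X → EReal) (c : ℝ) : Prop :=
  ∀ (z x : X) (s : ℝ), 0 ≤ s → s ≤ 1 →
    Θ (s • z + (1 - s) • x) + ((c * s * (1 - s) * ‖z - x‖ ^ 2 : ℝ) : EReal)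
      ≤ (s : EReal) * Θ z + ((1 - s : ℝ) : EReal) * Θ x

/-- The Bregman distance `D_ζ Θ(z, x)`; taken through `EReal.toReal`, so it is meaningful only
where `Θ` is finite. -/
def bregmanDist (Θ : X → EReal) (ζ z x : X) : ℝ :=
  (Θ z).toReal - (Θ x).toReal - ⟪ζ, z - x⟫_ℝ

variable {Θ : X → EReal} {ζ x z : X}

theorem coe_bregmanDist (hbot : ∀ w, Θ w ≠ ⊥) (hz : Θ z ≠ ⊤) (hx : Θ x ≠ ⊤) :
    (bregmanDist Θ ζ z x : EReal) = Θ z - Θ x - ((⟪ζ, z - x⟫_ℝ : ℝ) : EReal) := by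
  rw [bregmanDist, EReal.coe_sub, EReal.coe_sub, EReal.coe_toReal hz (hbot z),
    EReal.coe_toReal hx (hbot x)]

theorem bregmanDist_sub_bregmanDist (Θ : X → EReal) (ζ ζ' z x x' : X) :
    bregmanDist Θ ζ z x - bregmanDist Θ ζ' z x'
      = bregmanDist Θ ζ x' x + ⟪ζ' - ζ, z - x'⟫_ℝ := by
  simp only [bregmanDist, inner_sub_left, inner_sub_right]
  ring

theorem IsSubgradient.ne_top (h : IsSubgradient Θ ζ x) (hz : Θ z ≠ ⊤) : Θ x ≠ ⊤ := by
  intro hx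
  have := h z
  rw [hx, EReal.top_sub_coe, top_le_iff] at this
  exact hz (by rw [← EReal.sub_add_cancel (a := Θ z) (b := ⟪ζ, z⟫_ℝ), this, EReal.top_add_coe])

theorem IsSubgradient.bregmanDist_nonneg (hbot : ∀ w, Θ w ≠ ⊥) (h : IsSubgradient Θ ζ x)
    (hx : Θ x ≠ ⊤) (hz : Θ z ≠ ⊤) : 0 ≤ bregmanDist Θ ζ z x := by
  have hle := h z
  rw [← EReal.coe_toReal hx (hbot x), ← EReal.coe_toReal hz (hbot z), ← EReal.coe_sub,
    ← EReal.coe_sub, EReal.coe_le_coe_iff] at hle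
  rw [bregmanDist, inner_sub_right]
  linarith

theorem IsSubgradient.mul_one_sub_mul_sq_le_bregmanDist {c s : ℝ} (hΘ : StronglyConvexWith Θ c)
    (hbot : ∀ w, Θ w ≠ ⊥) (h : IsSubgradient Θ ζ x) (hx : Θ x ≠ ⊤) (hz : Θ z ≠ ⊤)
    (hs₀ : 0 < s) (hs₁ : s ≤ 1) :
    c * (1 - s) * ‖z - x‖ ^ 2 ≤ bregmanDist Θ ζ z x := by
  set w := s • z + (1 - s) • x
  have hconv := hΘ z x s hs₀.le hs₁
  rw [← EReal.coe_toReal hx (hbot x), ← EReal.coe_toReal hz (hbot z), ← EReal.coe_mul,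
    ← EReal.coe_mul, ← EReal.coe_add] at hconv
  have hw : Θ w ≠ ⊤ := fun hw => by
    rw [hw, EReal.top_add_coe, top_le_iff] at hconv
    exact EReal.coe_ne_top _ hconv
  rw [← EReal.coe_toReal hw (hbot w), ← EReal.coe_add, EReal.coe_le_coe_iff] at hconv
  have hwx : 0 ≤ bregmanDist Θ ζ w x := h.bregmanDist_nonneg hbot hx hw
  have hsub : w - x = s • (z - x) := by module
  rw [bregmanDist, hsub, inner_smul_right] at hwx
  have : s * (c * (1 - s) * ‖z - x‖ ^ 2) ≤ s * bregmanDist Θ ζ z x := by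
    rw [bregmanDist]; nlinarith
  exact le_of_mul_le_mul_left this hs₀

theorem IsSubgradient.mul_sq_le_bregmanDist {c : ℝ} (hΘ : StronglyConvexWith Θ c)
    (hbot : ∀ w, Θ w ≠ ⊥) (h : IsSubgradient Θ ζ x) (hx : Θ x ≠ ⊤) (hz : Θ z ≠ ⊤) :
    c * ‖z - x‖ ^ 2 ≤ bregmanDist Θ ζ z x := by
  have hlim : Filter.Tendsto (fun s : ℝ => c * (1 - s) * ‖z - x‖ ^ 2) (nhdsWithin 0 (Set.Ioi 0))
      (nhds (c * ‖z - x‖ ^ 2)) := by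
    have : Continuous fun s : ℝ => c * (1 - s) * ‖z - x‖ ^ 2 := by fun_prop
    simpa using (this.tendsto 0).mono_left nhdsWithin_le_nhds
  refine le_of_tendsto hlim ?_
  filter_upwards [Ioo_mem_nhdsGT one_pos] with s hs
  exact h.mul_one_sub_mul_sq_le_bregmanDist hΘ hbot hx hz hs.1 hs.2.le

end Bregman

theorem neg_sq_div_le_mul_sq_add_inner {X : Type*} [NormedAddCommGroup X]
    [InnerProductSpace ℝ X] {c : ℝ} (hc : 0 < c) (u v : X) :
    -(‖u‖ ^ 2 / (4 * c)) ≤ c * ‖v‖ ^ 2 + ⟪u, v⟫_ℝ := by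
  have hcs : 0 ≤ (2 * c * ‖v‖ - ‖u‖) ^ 2 / (4 * c) := by positivity
  have huv : -(‖u‖ * ‖v‖) ≤ ⟪u, v⟫_ℝ := neg_le_of_abs_le (abs_real_inner_le_norm u v)
  have hexp : (2 * c * ‖v‖ - ‖u‖) ^ 2 / (4 * c) = c * ‖v‖ ^ 2 - ‖u‖ * ‖v‖ + ‖u‖ ^ 2 / (4 * c) := by
    field_simp; ring
  linarith

theorem inner_sub_le_div_of_sq_mul_lt {Y : Type*} [NormedAddCommGroup Y] [InnerProductSpace ℝ Y]
    {s y yδ : Y} {a d δ τ : ℝ} (hτ : 0 < τ) (hd : 0 ≤ d) (hs : a * ‖s‖ ^ 2 ≤ d)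
    (hlarge : τ ^ 2 * δ ^ 2 < a * d) (hnoise : ‖yδ - y‖ ≤ δ) : ⟪s, y - yδ⟫_ℝ ≤ d / τ := by
  have hsq : (δ * ‖s‖ * τ) ^ 2 ≤ d ^ 2 := by
    nlinarith [mul_le_mul_of_nonneg_right hlarge.le (sq_nonneg ‖s‖),
      mul_le_mul_of_nonneg_left hs hd]
  have hδs : δ * ‖s‖ ≤ d / τ := by
    rw [le_div_iff₀ hτ]
    exact (le_abs_self _).trans (abs_le_of_sq_le_sq hsq hd)
  refine (real_inner_le_norm _ _).trans (le_trans ?_ hδs)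
  rw [norm_sub_rev, mul_comm]
  exact mul_le_mul_of_nonneg_right hnoise (norm_nonneg s)

section Iteration
variable {X Y : Type*} [NormedAddCommGroup X] [InnerProductSpace ℝ X] [CompleteSpace X]
  [NormedAddCommGroup Y] [InnerProductSpace ℝ Y] [CompleteSpace Y]
  {A : X →L[ℝ] Y} {a : ℝ}

theorem smul_add_apply_adjoint_apply_of_sq_eq {S B : Y →L[ℝ] Y}
    (hSsq : S ∘L S = a • (1 : Y →L[ℝ] Y) + A ∘L adjoint A) (hSB : S ∘L B = 1) (r : Y) :
    a • B (B r) + A (adjoint A (B (B r))) = r := by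
  have hSB' (v : Y) : S (B v) = v := by simpa using DFunLike.congr_fun hSB v
  calc a • B (B r) + A (adjoint A (B (B r))) = (S ∘L S) (B (B r)) := by simp [hSsq]
    _ = r := by simp [hSB']

theorem inner_eq_of_smul_add_apply_adjoint_apply {r s : Y}
    (hs : a • s + A (adjoint A s) = r) : ⟪s, r⟫_ℝ = a * ‖s‖ ^ 2 + ‖adjoint A s‖ ^ 2 := by
  rw [← hs, inner_add_right, real_inner_smul_right, ← adjoint_inner_left,
    real_inner_self_eq_norm_sq, real_inner_self_eq_norm_sq]

/-- If `A† s = 0`, then `r = a s` is orthogonal to the range of `A`, so `‖r‖ ≤ ‖yδ - y‖`. -/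
theorem adjoint_apply_ne_zero_of_sq_lt {x xh : X} {y yδ s : Y} {δ : ℝ}
    (hs : a • s + A (adjoint A s) = A x - yδ) (hxh : A xh = y) (hnoise : ‖yδ - y‖ ≤ δ)
    (hlarge : δ ^ 2 < a * ⟪s, A x - yδ⟫_ℝ) : adjoint A s ≠ 0 := by
  intro hu
  set r := A x - yδ
  rw [hu, map_zero, add_zero] at hs
  have hAr : adjoint A r = 0 := by rw [← hs, map_smul, hu, smul_zero]
  have hperp : ⟪r, A (x - xh)⟫_ℝ = 0 := by
    rw [← adjoint_inner_left, hAr, inner_zero_left]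
  have hr : ‖r‖ ^ 2 ≤ ‖r‖ * δ := calc
    ‖r‖ ^ 2 = ⟪r, A (x - xh) + (y - yδ)⟫_ℝ := by
      rw [← real_inner_self_eq_norm_sq, map_sub, hxh, sub_add_sub_cancel]
    _ = ⟪r, y - yδ⟫_ℝ := by rw [inner_add_right, hperp, zero_add]
    _ ≤ ‖r‖ * δ := (real_inner_le_norm _ _).trans
      (mul_le_mul_of_nonneg_left (by rwa [norm_sub_rev]) (norm_nonneg r))
  have hsq : a * ⟪s, r⟫_ℝ = ‖r‖ ^ 2 := by
    rw [← real_inner_smul_left, hs, real_inner_self_eq_norm_sq]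
  nlinarith [norm_nonneg r, (norm_nonneg _).trans hnoise]

theorem bregmanDist_decrease_of_step_bounds {Θ : X → EReal} {c₀ : ℝ} (hc₀ : 0 < c₀)
    (hΘ : StronglyConvexWith Θ c₀) (hbot : ∀ w, Θ w ≠ ⊥)
    {y yδ : Y} {δ τ μ₀ μ₁ t : ℝ} (hnoise : ‖yδ - y‖ ≤ δ) (hτ : 0 < τ) (ha : 0 < a)
    (hμ₀ : 0 ≤ μ₀) (hμ₀' : μ₀ ≤ 4 * c₀ * (1 - 1 / τ)) (hμ₁ : 0 ≤ μ₁)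
    {ξ x x' xh : X} {s : Y} (hsub : IsSubgradient Θ ξ x) (hx : Θ x ≠ ⊤) (hx' : Θ x' ≠ ⊤)
    (hxh : A xh = y) (hs : a • s + A (adjoint A s) = A x - yδ)
    (hlarge : τ ^ 2 * δ ^ 2 < a * ⟪s, A x - yδ⟫_ℝ) (ht_low : min μ₀ μ₁ ≤ t)
    (ht_up : t * ‖adjoint A s‖ ^ 2 ≤ μ₀ * ⟪s, A x - yδ⟫_ℝ) :
    (1 - 1 / τ - μ₀ / (4 * c₀)) * min μ₀ μ₁ * τ ^ 2 * δ ^ 2 * (1 / a)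
      ≤ bregmanDist Θ ξ xh x - bregmanDist Θ (ξ - t • adjoint A s) xh x' := by
  set d := ⟪s, A x - yδ⟫_ℝ
  set u := adjoint A s
  have hd : d = a * ‖s‖ ^ 2 + ‖u‖ ^ 2 := inner_eq_of_smul_add_apply_adjoint_apply hs
  have hs_le : a * ‖s‖ ^ 2 ≤ d := by rw [hd]; exact le_add_of_nonneg_right (sq_nonneg _)
  have hd₀ : 0 ≤ d := by rw [hd]; positivity
  have hd_low : τ ^ 2 * δ ^ 2 * (1 / a) ≤ d := by
    rw [mul_one_div, div_le_iff₀ ha]; linarith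
  have ht₀ : 0 ≤ t := (le_min hμ₀ hμ₁).trans ht_low
  have hnoise_s := inner_sub_le_div_of_sq_mul_lt hτ hd₀ hs_le hlarge hnoise
  have hc₂ : 0 ≤ 1 - 1 / τ - μ₀ / (4 * c₀) := by
    rw [sub_nonneg, div_le_iff₀ (by positivity)]; linarith
  have hconv := hsub.mul_sq_le_bregmanDist hΘ hbot hx hx'
  have hyoung := neg_sq_div_le_mul_sq_add_inner hc₀ (t • u) (x' - x)
  rw [norm_smul, mul_pow, Real.norm_eq_abs, sq_abs] at hyoung
  have hyoung' : t ^ 2 * ‖u‖ ^ 2 / (4 * c₀) ≤ t * (μ₀ * d) / (4 * c₀) := by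
    refine div_le_div_of_nonneg_right ?_ (by positivity)
    rw [sq, mul_assoc]
    exact mul_le_mul_of_nonneg_left ht_up ht₀
  have hdual : ⟪ξ - t • u - ξ, xh - x'⟫_ℝ = t * d + ⟪t • u, x' - x⟫_ℝ - t * ⟪s, y - yδ⟫_ℝ := by
    simp only [u, d, sub_sub_cancel_left, inner_neg_left, real_inner_smul_left,
      adjoint_inner_left, hxh, inner_sub_right]
    ring
  rw [bregmanDist_sub_bregmanDist, hdual]
  calc (1 - 1 / τ - μ₀ / (4 * c₀)) * min μ₀ μ₁ * τ ^ 2 * δ ^ 2 * (1 / a)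
      = (1 - 1 / τ - μ₀ / (4 * c₀)) * (min μ₀ μ₁ * (τ ^ 2 * δ ^ 2 * (1 / a))) := by ring
    _ ≤ (1 - 1 / τ - μ₀ / (4 * c₀)) * (t * d) := by gcongr
    _ = t * d - t * (d / τ) - t * (μ₀ * d) / (4 * c₀) := by field_simp
    _ ≤ _ := by linarith [mul_le_mul_of_nonneg_left hnoise_s ht₀]

theorem bregmanDist_decrease_of_discrepancy_gt {Θ : X → EReal} {c₀ : ℝ} (hc₀ : 0 < c₀)
    (hΘ : StronglyConvexWith Θ c₀) (hbot : ∀ w, Θ w ≠ ⊥)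
    {y yδ : Y} {δ τ μ₀ μ₁ : ℝ} (hnoise : ‖yδ - y‖ ≤ δ) (hτ : 1 ≤ τ) (ha : 0 < a)
    (hμ₀ : 0 ≤ μ₀) (hμ₀' : μ₀ ≤ 4 * c₀ * (1 - 1 / τ)) (hμ₁ : 0 ≤ μ₁)
    {ξ x x' xh : X} {s : Y} (hsub : IsSubgradient Θ ξ x) (hx : Θ x ≠ ⊤) (hx' : Θ x' ≠ ⊤)
    (hxh : A xh = y) (hs : a • s + A (adjoint A s) = A x - yδ)
    (hlarge : τ ^ 2 * δ ^ 2 < a * ⟪s, A x - yδ⟫_ℝ) :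
    (1 - 1 / τ - μ₀ / (4 * c₀)) * min μ₀ μ₁ * τ ^ 2 * δ ^ 2 * (1 / a)
      ≤ bregmanDist Θ ξ xh x - bregmanDist Θ
          (ξ - min (μ₀ * ⟪s, A x - yδ⟫_ℝ / ‖adjoint A s‖ ^ 2) μ₁ • adjoint A s) xh x' := by
  set d := ⟪s, A x - yδ⟫_ℝ
  set u := adjoint A s
  have hd : d = a * ‖s‖ ^ 2 + ‖u‖ ^ 2 := inner_eq_of_smul_add_apply_adjoint_apply hs
  have hu_le : ‖u‖ ^ 2 ≤ d := by rw [hd]; exact le_add_of_nonneg_left (by positivity)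
  have hu : 0 < ‖u‖ ^ 2 := by
    refine pow_pos (norm_pos_iff.mpr (adjoint_apply_ne_zero_of_sq_lt hs hxh hnoise ?_)) 2
    exact (le_mul_of_one_le_left (sq_nonneg δ) (one_le_pow₀ hτ)).trans_lt hlarge
  refine bregmanDist_decrease_of_step_bounds hc₀ hΘ hbot hnoise (one_pos.trans_le hτ) ha hμ₀
    hμ₀' hμ₁ hsub hx hx' hxh hs hlarge ?_ ?_
  · exact min_le_min_right _ ((le_div_iff₀ hu).mpr (mul_le_mul_of_nonneg_left hu_le hμ₀))
  · exact (mul_le_mul_of_nonneg_right (min_le_left _ _) hu.le).trans (div_mul_cancel₀ _ hu.ne').le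

end Iteration

theorem exists_of_forall_mul_sum_one_div_le {P : ℕ → Prop} {α : ℕ → ℝ} {c M : ℝ} (hc : 0 < c)
    (hα : ∀ n, 0 < α n) (hanti : Antitone α)
    (h : ∀ N, (∀ n < N, ¬ P n) → c * ∑ n ∈ Finset.range N, 1 / α n ≤ M) : ∃ n, P n := by
  by_contra! hP
  obtain ⟨N, hN⟩ := exists_nat_gt (M * α 0 / c)
  have hsum : N * (1 / α 0) ≤ ∑ n ∈ Finset.range N, 1 / α n := by
    simpa using Finset.card_nsmul_le_sum (Finset.range N) _ _
      fun n _ => one_div_le_one_div_of_le (hα n) (hanti (Nat.zero_le n))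
  have hbound : c * N / α 0 ≤ M := by
    rw [mul_div_assoc, ← mul_one_div]
    exact (mul_le_mul_of_nonneg_left hsum hc.le).trans (h N fun n _ => hP n)
  rw [div_le_iff₀ (hα 0)] at hbound
  rw [div_lt_iff₀ hc] at hN
  linarith

theorem stopping_index_finite_and_estimate_general
    {X Y : Type*} [NormedAddCommGroup X] [InnerProductSpace ℝ X] [CompleteSpace X]
    [NormedAddCommGroup Y] [InnerProductSpace ℝ Y] [CompleteSpace Y]
    (Θ : X → EReal) (c₀ : ℝ) (hc₀ : 0 < c₀)
    (hproper : (∀ z, Θ z ≠ ⊥) ∧ ∃ z, Θ z ≠ ⊤)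
    (hsc : ∀ (z x : X) (s : ℝ), 0 ≤ s → s ≤ 1 →
      Θ (s • z + (1 - s) • x) + ((c₀ * s * (1 - s) * ‖z - x‖ ^ 2 : ℝ) : EReal)
        ≤ (s : EReal) * Θ z + ((1 - s : ℝ) : EReal) * Θ x)
    (A : X →L[ℝ] Y) (y yδ : Y) (δ : ℝ) (hδ : 0 < δ) (hnoise : ‖yδ - y‖ ≤ δ)
    (τ : ℝ) (hτ : 1 < τ)
    (α : ℕ → ℝ) (hαpos : ∀ n, 0 < α n) (hαdec : ∀ n, α (n + 1) ≤ α n)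
    (S B : ℕ → (Y →L[ℝ] Y))
    (hSsq : ∀ n, S n ∘L S n = α n • (1 : Y →L[ℝ] Y) + A ∘L ContinuousLinearMap.adjoint A)
    (hSB : ∀ n, S n ∘L B n = 1)
    (μ₀ μ₁ : ℝ) (hμ₀ : 0 < μ₀) (hμ₀' : μ₀ < 4 * c₀ * (1 - 1 / τ)) (hμ₁ : 0 < μ₁)
    (ξ x : ℕ → X) (t : ℕ → ℝ)
    (hargmin : ∀ n, ∀ z : X,
      Θ (x n) - ((⟪ξ n, x n⟫_ℝ : ℝ) : EReal) ≤ Θ z - ((⟪ξ n, z⟫_ℝ : ℝ) : EReal))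
    (ht : ∀ n, t n = min (μ₀ * ⟪B n (B n (A (x n) - yδ)), A (x n) - yδ⟫_ℝ /
      ‖ContinuousLinearMap.adjoint A (B n (B n (A (x n) - yδ)))‖ ^ 2) μ₁)
    (hiter : ∀ n, ξ (n + 1)
      = ξ n - t n • ContinuousLinearMap.adjoint A (B n (B n (A (x n) - yδ))))
    (hex : ∃ xhat : X, A xhat = y ∧ Θ xhat ≠ ⊤) :
    ∃ nδ : ℕ,
      (α nδ * ⟪B nδ (B nδ (A (x nδ) - yδ)), A (x nδ) - yδ⟫_ℝ ≤ τ ^ 2 * δ ^ 2) ∧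
      (∀ n < nδ, ¬ (α n * ⟪B n (B n (A (x n) - yδ)), A (x n) - yδ⟫_ℝ ≤ τ ^ 2 * δ ^ 2)) ∧
      ∀ (xhat : X), A xhat = y → Θ xhat ≠ ⊤ →
        ((((1 - 1 / τ - μ₀ / (4 * c₀)) * min μ₀ μ₁ * τ ^ 2) * δ ^ 2
            * ∑ n ∈ Finset.range nδ, 1 / α n : ℝ) : EReal)
          ≤ Θ xhat - Θ (x 0) - ((⟪ξ 0, xhat - x 0⟫_ℝ : ℝ) : EReal) := by
  obtain ⟨hbot, -⟩ := hproper
  obtain ⟨xh₀, hAxh₀, hxh₀⟩ := hex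
  have hsub (n : ℕ) : IsSubgradient Θ (ξ n) (x n) := hargmin n
  have hfin (n : ℕ) : Θ (x n) ≠ ⊤ := (hsub n).ne_top hxh₀
  have hsum (N : ℕ)
      (hN : ∀ n < N, ¬ α n * ⟪B n (B n (A (x n) - yδ)), A (x n) - yδ⟫_ℝ ≤ τ ^ 2 * δ ^ 2)
      (xh : X) (hAxh : A xh = y) (hxh : Θ xh ≠ ⊤) :
      (1 - 1 / τ - μ₀ / (4 * c₀)) * min μ₀ μ₁ * τ ^ 2 * δ ^ 2 * ∑ n ∈ Finset.range N, 1 / α n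
        ≤ bregmanDist Θ (ξ 0) xh (x 0) := by
    refine le_trans ?_ (sub_le_self _ ((hsub N).bregmanDist_nonneg hbot (hfin N) hxh))
    rw [Finset.mul_sum, ← Finset.sum_range_sub' fun n => bregmanDist Θ (ξ n) xh (x n)]
    refine Finset.sum_le_sum fun n hn => ?_
    rw [hiter n, ht n]
    exact bregmanDist_decrease_of_discrepancy_gt hc₀ hsc hbot hnoise hτ.le (hαpos n) hμ₀.le hμ₀'.le hμ₁.le
      (hsub n) (hfin n) (hfin (n + 1)) hAxh
      (smul_add_apply_adjoint_apply_of_sq_eq (hSsq n) (hSB n) _)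
      (not_le.mp (hN n (Finset.mem_range.mp hn)))
  have hc₃ : 0 < (1 - 1 / τ - μ₀ / (4 * c₀)) * min μ₀ μ₁ * τ ^ 2 * δ ^ 2 := by
    have hc₂ : μ₀ / (4 * c₀) < 1 - 1 / τ := by rwa [div_lt_iff₀ (by positivity), mul_comm]
    have : (0 : ℝ) < τ := by linarith
    exact mul_pos (mul_pos (mul_pos (by linarith) (lt_min hμ₀ hμ₁)) (by positivity)) (by positivity)
  have hstop := exists_of_forall_mul_sum_one_div_le hc₃ hαpos (antitone_nat_of_succ_le hαdec)
    fun N hN => hsum N hN xh₀ hAxh₀ hxh₀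
  refine ⟨Nat.find hstop, Nat.find_spec hstop, fun n => Nat.find_min hstop, ?_⟩
  intro xh hAxh hxh
  rw [← coe_bregmanDist hbot hxh (hfin 0), EReal.coe_le_coe_iff]
  exact hsum _ (fun n => Nat.find_min hstop) xh hAxh hxh

/-- Under the hypotheses of the noisy monotonicity lemma, the stopping
index `n_δ` (first `n` with `αₙ⟪(αₙI+AA*)⁻¹(Axₙ^δ-y^δ), Axₙ^δ-y^δ⟫ ≤ τ²δ²`) is a finite
integer and satisfies `c₃ δ² ∑_{n<n_δ} 1/αₙ ≤ D_{ξ₀}Θ(x̂, x₀)` with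
`c₃ = (1 - 1/τ - μ₀/(4c₀)) min{μ₀, μ₁} τ²`, for any solution `x̂` in `dom Θ`. -/
theorem stopping_index_finite_and_estimate
    {X Y : Type*} [NormedAddCommGroup X] [InnerProductSpace ℝ X] [CompleteSpace X]
    [NormedAddCommGroup Y] [InnerProductSpace ℝ Y] [CompleteSpace Y]
    (Θ : X → EReal) (c₀ : ℝ) (hc₀ : 0 < c₀)
    (hproper : (∀ z, Θ z ≠ ⊥) ∧ ∃ z, Θ z ≠ ⊤)
    (hlsc : LowerSemicontinuous Θ)
    (hsc : ∀ (z x : X) (s : ℝ), 0 ≤ s → s ≤ 1 →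
      Θ (s • z + (1 - s) • x) + ((c₀ * s * (1 - s) * ‖z - x‖ ^ 2 : ℝ) : EReal)
        ≤ (s : EReal) * Θ z + ((1 - s : ℝ) : EReal) * Θ x)
    (A : X →L[ℝ] Y) (y yδ : Y) (δ : ℝ) (hδ : 0 < δ) (hnoise : ‖yδ - y‖ ≤ δ)
    (τ : ℝ) (hτ : 1 < τ)
    (α : ℕ → ℝ) (hαpos : ∀ n, 0 < α n) (hαdec : ∀ n, α (n + 1) ≤ α n)
    (S B : ℕ → (Y →L[ℝ] Y))
    (hSsa : ∀ n, IsSelfAdjoint (S n))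
    (hSpos : ∀ n, ∀ w : Y, 0 ≤ ⟪S n w, w⟫_ℝ)
    (hSsq : ∀ n, S n ∘L S n = α n • (1 : Y →L[ℝ] Y) + A ∘L ContinuousLinearMap.adjoint A)
    (hBS : ∀ n, B n ∘L S n = 1) (hSB : ∀ n, S n ∘L B n = 1)
    (μ₀ μ₁ : ℝ) (hμ₀ : 0 < μ₀) (hμ₀' : μ₀ < 4 * c₀ * (1 - 1 / τ)) (hμ₁ : 0 < μ₁)
    (ξ x : ℕ → X) (t : ℕ → ℝ)
    (hargmin : ∀ n, ∀ z : X,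
      Θ (x n) - ((⟪ξ n, x n⟫_ℝ : ℝ) : EReal) ≤ Θ z - ((⟪ξ n, z⟫_ℝ : ℝ) : EReal))
    (ht : ∀ n, t n = min (μ₀ * ⟪B n (B n (A (x n) - yδ)), A (x n) - yδ⟫_ℝ /
      ‖ContinuousLinearMap.adjoint A (B n (B n (A (x n) - yδ)))‖ ^ 2) μ₁)
    (hiter : ∀ n, ξ (n + 1)
      = ξ n - t n • ContinuousLinearMap.adjoint A (B n (B n (A (x n) - yδ))))
    (hex : ∃ xhat : X, A xhat = y ∧ Θ xhat ≠ ⊤) :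
    ∃ nδ : ℕ,
      (α nδ * ⟪B nδ (B nδ (A (x nδ) - yδ)), A (x nδ) - yδ⟫_ℝ ≤ τ ^ 2 * δ ^ 2) ∧
      (∀ n < nδ, ¬ (α n * ⟪B n (B n (A (x n) - yδ)), A (x n) - yδ⟫_ℝ ≤ τ ^ 2 * δ ^ 2)) ∧
      ∀ (xhat : X), A xhat = y → Θ xhat ≠ ⊤ →
        ((((1 - 1 / τ - μ₀ / (4 * c₀)) * min μ₀ μ₁ * τ ^ 2) * δ ^ 2
            * ∑ n ∈ Finset.range nδ, 1 / α n : ℝ) : EReal)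
          ≤ Θ xhat - Θ (x 0) - ((⟪ξ 0, xhat - x 0⟫_ℝ : ℝ) : EReal) :=
  stopping_index_finite_and_estimate_general Θ c₀ hc₀ hproper hsc A y yδ δ hδ hnoise τ hτ α hαpos
    hαdec S B hSsq hSB μ₀ μ₁ hμ₀ hμ₀' hμ₁ ξ x t hargmin ht hiter hex
end

section
/- Let Θ be proper, lsc, strongly convex with modulus c₀ on a Hilbert space X, and consider exact-data iterates (xₙ, ξₙ) and noisy-data iterates (xₙ^δ, ξₙ^δ) produced by the respective iterations with step sizes chosen by the min-rule (same μ₀, μ₁, same {αₙ}) from the same initial data ξ₀^δ = ξ₀, x₀^δ = x₀, where ‖y^δ - y‖ ≤ δ. Then for each fixed n, ‖ξₙ^δ - ξₙ‖ → 0 and ‖xₙ^δ - xₙ‖ → 0 as δ → 0. -/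
open scoped InnerProductSpace Topology
open ContinuousLinearMap Filter

/-!
Strong convexity of `Θ` makes `∇Θ*` Lipschitz, so `xₙ^δ → xₙ` whenever `ξₙ^δ → ξₙ`, and then
the residuals `A xₙ^δ - y^δ` converge as well. By induction on `n`, `ξₙ₊₁^δ → ξₙ₊₁`: where the
exact direction `A*(αₙI + AA*)⁻¹(A xₙ - y)` is nonzero, the min-rule step size is continuous
in the residual, and where it vanishes the noisy step sizes stay in `[0, μ₁]`, so the noisy update
tends to `0` together with its direction.
-/

section StrongConvexity

variable {X : Type*} [NormedAddCommGroup X] [InnerProductSpace ℝ X]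

def IsStronglyConvexWith (c₀ : ℝ) (Θ : X → EReal) : Prop :=
  ∀ (z x : X) (s : ℝ), 0 ≤ s → s ≤ 1 →
    Θ (s • z + (1 - s) • x) + ((c₀ * s * (1 - s) * ‖z - x‖ ^ 2 : ℝ) : EReal)
      ≤ (s : EReal) * Θ z + ((1 - s : ℝ) : EReal) * Θ x

/-- In the paper's notation, `x = ∇Θ*(ξ)`. -/
def MinimizesTilt (Θ : X → EReal) (ξ x : X) : Prop :=
  ∀ z, Θ x - ((⟪ξ, x⟫_ℝ : ℝ) : EReal) ≤ Θ z - ((⟪ξ, z⟫_ℝ : ℝ) : EReal)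

variable {Θ : X → EReal} {c₀ : ℝ} {ξ ξ₁ ξ₂ x x₁ x₂ : X}

theorem MinimizesTilt.ne_top (h : MinimizesTilt Θ ξ x) (hfin : ∃ z, Θ z ≠ ⊤) : Θ x ≠ ⊤ := by
  obtain ⟨z, hz⟩ := hfin
  intro hx
  have hz' := h z
  rw [hx, EReal.top_sub_coe, top_le_iff] at hz'
  generalize Θ z = w at hz hz'
  induction w using EReal.rec <;> simp_all [← EReal.coe_sub]

theorem MinimizesTilt.exists_eq_coe (h : MinimizesTilt Θ ξ x) (hbot : ∀ z, Θ z ≠ ⊥)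
    (hfin : ∃ z, Θ z ≠ ⊤) : ∃ a : ℝ, Θ x = a :=
  ⟨(Θ x).toReal, (EReal.coe_toReal (h.ne_top hfin) (hbot x)).symm⟩

-- Add the two minimality conditions tested at the midpoint of `x₁` and `x₂`.
theorem MinimizesTilt.mul_norm_sub_sq_le_inner (hbot : ∀ z, Θ z ≠ ⊥) (hfin : ∃ z, Θ z ≠ ⊤)
    (hsc : IsStronglyConvexWith c₀ Θ) (h₁ : MinimizesTilt Θ ξ₁ x₁)
    (h₂ : MinimizesTilt Θ ξ₂ x₂) : c₀ * ‖x₂ - x₁‖ ^ 2 ≤ ⟪ξ₂ - ξ₁, x₂ - x₁⟫_ℝ := by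
  obtain ⟨a, ha⟩ := h₁.exists_eq_coe hbot hfin
  obtain ⟨b, hb⟩ := h₂.exists_eq_coe hbot hfin
  set m : X := (1 / 2 : ℝ) • x₂ + (1 - 1 / 2 : ℝ) • x₁ with hm
  have hmid := hsc x₂ x₁ (1 / 2) (by norm_num) (by norm_num)
  rw [ha, hb, ← EReal.coe_mul, ← EReal.coe_mul, ← EReal.coe_add] at hmid
  have hm_top : Θ m ≠ ⊤ := fun htop => by
    rw [htop, EReal.top_add_coe, top_le_iff] at hmid
    exact EReal.coe_ne_top _ hmid
  obtain ⟨e, he⟩ : ∃ e : ℝ, Θ m = e := ⟨_, (EReal.coe_toReal hm_top (hbot m)).symm⟩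
  rw [he] at hmid
  have hmid' : e + c₀ * (1 / 2) * (1 - 1 / 2) * ‖x₂ - x₁‖ ^ 2
      ≤ 1 / 2 * b + (1 - 1 / 2) * a := by exact_mod_cast hmid
  have h₁m : a - ⟪ξ₁, x₁⟫_ℝ ≤ e - ⟪ξ₁, m⟫_ℝ := by
    have := h₁ m; rw [ha, he] at this; exact_mod_cast this
  have h₂m : b - ⟪ξ₂, x₂⟫_ℝ ≤ e - ⟪ξ₂, m⟫_ℝ := by
    have := h₂ m; rw [hb, he] at this; exact_mod_cast this
  simp only [hm, inner_add_right, inner_smul_right] at h₁m h₂m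
  simp only [inner_sub_left, inner_sub_right]
  linarith

theorem MinimizesTilt.norm_sub_le_div (hc₀ : 0 < c₀) (hbot : ∀ z, Θ z ≠ ⊥)
    (hfin : ∃ z, Θ z ≠ ⊤) (hsc : IsStronglyConvexWith c₀ Θ) (h₁ : MinimizesTilt Θ ξ₁ x₁)
    (h₂ : MinimizesTilt Θ ξ₂ x₂) : ‖x₂ - x₁‖ ≤ ‖ξ₂ - ξ₁‖ / c₀ := by
  have hmono := h₁.mul_norm_sub_sq_le_inner hbot hfin hsc h₂
  have hcs := real_inner_le_norm (ξ₂ - ξ₁) (x₂ - x₁)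
  rw [le_div_iff₀ hc₀]
  nlinarith [norm_nonneg (x₂ - x₁), norm_nonneg (ξ₂ - ξ₁)]

end StrongConvexity

theorem IsSelfAdjoint.of_mul_eq_one {R : Type*} [Monoid R] [StarMul R] {S B : R}
    (hS : IsSelfAdjoint S) (h : S * B = 1) : IsSelfAdjoint B := by
  have hstar : star B * S = 1 := by simpa [hS.star_eq] using congrArg star h
  exact left_inv_eq_right_inv hstar h

section MinRule

variable {X Y : Type*} [NormedAddCommGroup X] [InnerProductSpace ℝ X] [CompleteSpace X]
  [NormedAddCommGroup Y] [InnerProductSpace ℝ Y] [CompleteSpace Y]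
  (A : X →L[ℝ] Y) {B : Y →L[ℝ] Y} {μ₀ μ₁ : ℝ}

/-- The min-rule step size at residual `r = A x - y`, where `B ∘L B = (α I + A A*)⁻¹`. -/
noncomputable def minRuleStep (B : Y →L[ℝ] Y) (μ₀ μ₁ : ℝ) (r : Y) : ℝ :=
  min (μ₀ * ⟪B (B r), r⟫_ℝ / ‖adjoint A (B (B r))‖ ^ 2) μ₁

theorem minRuleStep_nonneg (hB : IsSelfAdjoint B) (hμ₀ : 0 ≤ μ₀) (hμ₁ : 0 ≤ μ₁) (r : Y) :
    0 ≤ minRuleStep A B μ₀ μ₁ r := by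
  have hBB : 0 ≤ ⟪B (B r), r⟫_ℝ := by
    nth_rewrite 1 [← hB.adjoint_eq]
    rw [adjoint_inner_left]
    exact real_inner_self_nonneg
  unfold minRuleStep
  positivity

theorem minRuleStep_le (r : Y) : minRuleStep A B μ₀ μ₁ r ≤ μ₁ :=
  min_le_right _ _

theorem continuousAt_minRuleStep {r : Y} (h : adjoint A (B (B r)) ≠ 0) :
    ContinuousAt (minRuleStep A B μ₀ μ₁) r := by
  unfold minRuleStep
  refine Tendsto.min (ContinuousAt.div (by fun_prop) (by fun_prop) ?_) tendsto_const_nhds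
  positivity

theorem tendsto_minRuleStep_smul {ι : Type*} {L : Filter ι} {r : ι → Y} {r₀ : Y} {t : ℝ}
    (hB : IsSelfAdjoint B) (hμ₀ : 0 ≤ μ₀) (hμ₁ : 0 ≤ μ₁) (hr : Tendsto r L (𝓝 r₀))
    (ht : r₀ ≠ 0 → t = minRuleStep A B μ₀ μ₁ r₀) :
    Tendsto (fun i => minRuleStep A B μ₀ μ₁ (r i) • adjoint A (B (B (r i)))) L
      (𝓝 (t • adjoint A (B (B r₀)))) := by
  have hdir : Tendsto (fun i => adjoint A (B (B (r i)))) L (𝓝 (adjoint A (B (B r₀)))) :=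
    ((by fun_prop : Continuous fun w => adjoint A (B (B w))).tendsto r₀).comp hr
  by_cases h0 : adjoint A (B (B r₀)) = 0
  · rw [h0] at hdir
    rw [h0, smul_zero]
    refine IsBoundedUnder.smul_tendsto_zero (isBoundedUnder_of ⟨μ₁, fun i => ?_⟩) hdir
    simp only [Function.comp_apply, Real.norm_eq_abs,
      abs_of_nonneg (minRuleStep_nonneg A hB hμ₀ hμ₁ _)]
    exact minRuleStep_le A _
  · have hr₀ : r₀ ≠ 0 := by rintro rfl; simp at h0
    rw [ht hr₀]
    exact ((continuousAt_minRuleStep A h0).tendsto.comp hr).smul hdir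

end MinRule

theorem noisy_iterates_stability_general
    {X Y : Type*} [NormedAddCommGroup X] [InnerProductSpace ℝ X] [CompleteSpace X]
    [NormedAddCommGroup Y] [InnerProductSpace ℝ Y] [CompleteSpace Y]
    (Θ : X → EReal) (c₀ : ℝ) (hc₀ : 0 < c₀)
    (hproper : (∀ z, Θ z ≠ ⊥) ∧ ∃ z, Θ z ≠ ⊤)
    (hsc : ∀ (z x : X) (s : ℝ), 0 ≤ s → s ≤ 1 →
      Θ (s • z + (1 - s) • x) + ((c₀ * s * (1 - s) * ‖z - x‖ ^ 2 : ℝ) : EReal)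
        ≤ (s : EReal) * Θ z + ((1 - s : ℝ) : EReal) * Θ x)
    (A : X →L[ℝ] Y) (y : Y)
    (S B : ℕ → (Y →L[ℝ] Y))
    (hSsa : ∀ n, IsSelfAdjoint (S n))
    (hSB : ∀ n, S n ∘L B n = 1)
    (μ₀ μ₁ : ℝ) (hμ₀ : 0 < μ₀) (hμ₁ : 0 < μ₁)
    -- exact-data iteration
    (ξ x : ℕ → X) (t : ℕ → ℝ)
    (hargmin : ∀ n, ∀ z : X,
      Θ (x n) - ((⟪ξ n, x n⟫_ℝ : ℝ) : EReal) ≤ Θ z - ((⟪ξ n, z⟫_ℝ : ℝ) : EReal))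
    (ht : ∀ n, (A (x n) ≠ y →
        t n = min (μ₀ * ⟪B n (B n (A (x n) - y)), A (x n) - y⟫_ℝ /
          ‖ContinuousLinearMap.adjoint A (B n (B n (A (x n) - y)))‖ ^ 2) μ₁) ∧
      (A (x n) = y → 0 ≤ t n ∧ t n ≤ μ₁))
    (hiter : ∀ n, ξ (n + 1)
      = ξ n - t n • ContinuousLinearMap.adjoint A (B n (B n (A (x n) - y))))
    -- noisy-data iterations, one for each δ > 0
    (yδ : ℝ → Y) (ξδ xδ : ℝ → ℕ → X) (tδ : ℝ → ℕ → ℝ)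
    (hnoise : ∀ δ > (0 : ℝ), ‖yδ δ - y‖ ≤ δ)
    (hinit : ∀ δ > (0 : ℝ), ξδ δ 0 = ξ 0)
    (hargminδ : ∀ δ > (0 : ℝ), ∀ n, ∀ z : X,
      Θ (xδ δ n) - ((⟪ξδ δ n, xδ δ n⟫_ℝ : ℝ) : EReal)
        ≤ Θ z - ((⟪ξδ δ n, z⟫_ℝ : ℝ) : EReal))
    (htδ : ∀ δ > (0 : ℝ), ∀ n, tδ δ n
      = min (μ₀ * ⟪B n (B n (A (xδ δ n) - yδ δ)), A (xδ δ n) - yδ δ⟫_ℝ /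
          ‖ContinuousLinearMap.adjoint A (B n (B n (A (xδ δ n) - yδ δ)))‖ ^ 2) μ₁)
    (hiterδ : ∀ δ > (0 : ℝ), ∀ n, ξδ δ (n + 1)
      = ξδ δ n - tδ δ n • ContinuousLinearMap.adjoint A (B n (B n (A (xδ δ n) - yδ δ)))) :
    ∀ n : ℕ,
      Filter.Tendsto (fun δ => ‖ξδ δ n - ξ n‖) (nhdsWithin 0 (Set.Ioi 0)) (nhds 0) ∧
      Filter.Tendsto (fun δ => ‖xδ δ n - x n‖) (nhdsWithin 0 (Set.Ioi 0)) (nhds 0) := by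
  set L : Filter ℝ := nhdsWithin 0 (Set.Ioi 0)
  have hBsa : ∀ n, IsSelfAdjoint (B n) := fun n => (hSsa n).of_mul_eq_one (hSB n)
  have hx : ∀ n, Tendsto (ξδ · n) L (𝓝 (ξ n)) → Tendsto (xδ · n) L (𝓝 (x n)) := by
    intro n hξ
    refine tendsto_iff_norm_sub_tendsto_zero.2 <| squeeze_zero' (.of_forall fun _ => norm_nonneg _)
      (eventually_mem_nhdsWithin.mono fun δ hδ => MinimizesTilt.norm_sub_le_div hc₀ hproper.1
        hproper.2 hsc (hargmin n) (hargminδ δ hδ n)) ?_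
    simpa using (tendsto_iff_norm_sub_tendsto_zero.1 hξ).div_const c₀
  have hy : Tendsto yδ L (𝓝 y) :=
    tendsto_iff_norm_sub_tendsto_zero.2 <| squeeze_zero' (.of_forall fun _ => norm_nonneg _)
      (eventually_mem_nhdsWithin.mono hnoise) (tendsto_id.mono_left nhdsWithin_le_nhds)
  have hξ : ∀ n, Tendsto (ξδ · n) L (𝓝 (ξ n)) := by
    intro n
    induction n with
    | zero =>
      exact tendsto_const_nhds.congr' (eventually_mem_nhdsWithin.mono fun δ hδ => (hinit δ hδ).symm)
    | succ n ih =>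
      have hr := ((A.continuous.tendsto _).comp (hx n ih)).sub hy
      rw [hiter n]
      refine (ih.sub (tendsto_minRuleStep_smul A (hBsa n) hμ₀.le hμ₁.le hr
        fun h => (ht n).1 (sub_ne_zero.1 h))).congr' ?_
      filter_upwards [self_mem_nhdsWithin] with δ hδ
      rw [hiterδ δ hδ n, htδ δ hδ n]
      rfl
  exact fun n => ⟨tendsto_iff_norm_sub_tendsto_zero.1 (hξ n),
    tendsto_iff_norm_sub_tendsto_zero.1 (hx n (hξ n))⟩

/-- Stability. Let `(xₙ, ξₙ)` be exact-data iterates and, for each noise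
level `δ > 0`, let `(xₙ^δ, ξₙ^δ)` be noisy-data iterates (same `μ₀, μ₁, {αₙ}`, same
initial `ξ₀`, data `y^δ` with `‖y^δ - y‖ ≤ δ`), with min-rule step sizes. Then for every
fixed `n`, `‖ξₙ^δ - ξₙ‖ → 0` and `‖xₙ^δ - xₙ‖ → 0` as `δ → 0⁺`. -/
theorem noisy_iterates_stability
    {X Y : Type*} [NormedAddCommGroup X] [InnerProductSpace ℝ X] [CompleteSpace X]
    [NormedAddCommGroup Y] [InnerProductSpace ℝ Y] [CompleteSpace Y]
    (Θ : X → EReal) (c₀ : ℝ) (hc₀ : 0 < c₀)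
    (hproper : (∀ z, Θ z ≠ ⊥) ∧ ∃ z, Θ z ≠ ⊤)
    (hlsc : LowerSemicontinuous Θ)
    (hsc : ∀ (z x : X) (s : ℝ), 0 ≤ s → s ≤ 1 →
      Θ (s • z + (1 - s) • x) + ((c₀ * s * (1 - s) * ‖z - x‖ ^ 2 : ℝ) : EReal)
        ≤ (s : EReal) * Θ z + ((1 - s : ℝ) : EReal) * Θ x)
    (A : X →L[ℝ] Y) (y : Y)
    (α : ℕ → ℝ) (hαpos : ∀ n, 0 < α n) (hαdec : ∀ n, α (n + 1) ≤ α n)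
    (S B : ℕ → (Y →L[ℝ] Y))
    (hSsa : ∀ n, IsSelfAdjoint (S n))
    (hSpos : ∀ n, ∀ w : Y, 0 ≤ ⟪S n w, w⟫_ℝ)
    (hSsq : ∀ n, S n ∘L S n = α n • (1 : Y →L[ℝ] Y) + A ∘L ContinuousLinearMap.adjoint A)
    (hBS : ∀ n, B n ∘L S n = 1) (hSB : ∀ n, S n ∘L B n = 1)
    (μ₀ μ₁ : ℝ) (hμ₀ : 0 < μ₀) (hμ₁ : 0 < μ₁)
    -- exact-data iteration
    (ξ x : ℕ → X) (t : ℕ → ℝ)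
    (hargmin : ∀ n, ∀ z : X,
      Θ (x n) - ((⟪ξ n, x n⟫_ℝ : ℝ) : EReal) ≤ Θ z - ((⟪ξ n, z⟫_ℝ : ℝ) : EReal))
    (ht : ∀ n, (A (x n) ≠ y →
        t n = min (μ₀ * ⟪B n (B n (A (x n) - y)), A (x n) - y⟫_ℝ /
          ‖ContinuousLinearMap.adjoint A (B n (B n (A (x n) - y)))‖ ^ 2) μ₁) ∧
      (A (x n) = y → 0 ≤ t n ∧ t n ≤ μ₁))
    (hiter : ∀ n, ξ (n + 1)
      = ξ n - t n • ContinuousLinearMap.adjoint A (B n (B n (A (x n) - y))))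
    -- noisy-data iterations, one for each δ > 0
    (yδ : ℝ → Y) (ξδ xδ : ℝ → ℕ → X) (tδ : ℝ → ℕ → ℝ)
    (hnoise : ∀ δ > (0 : ℝ), ‖yδ δ - y‖ ≤ δ)
    (hinit : ∀ δ > (0 : ℝ), ξδ δ 0 = ξ 0)
    (hargminδ : ∀ δ > (0 : ℝ), ∀ n, ∀ z : X,
      Θ (xδ δ n) - ((⟪ξδ δ n, xδ δ n⟫_ℝ : ℝ) : EReal)
        ≤ Θ z - ((⟪ξδ δ n, z⟫_ℝ : ℝ) : EReal))
    (htδ : ∀ δ > (0 : ℝ), ∀ n, tδ δ n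
      = min (μ₀ * ⟪B n (B n (A (xδ δ n) - yδ δ)), A (xδ δ n) - yδ δ⟫_ℝ /
          ‖ContinuousLinearMap.adjoint A (B n (B n (A (xδ δ n) - yδ δ)))‖ ^ 2) μ₁)
    (hiterδ : ∀ δ > (0 : ℝ), ∀ n, ξδ δ (n + 1)
      = ξδ δ n - tδ δ n • ContinuousLinearMap.adjoint A (B n (B n (A (xδ δ n) - yδ δ)))) :
    ∀ n : ℕ,
      Filter.Tendsto (fun δ => ‖ξδ δ n - ξ n‖) (nhdsWithin 0 (Set.Ioi 0)) (nhds 0) ∧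
      Filter.Tendsto (fun δ => ‖xδ δ n - x n‖) (nhdsWithin 0 (Set.Ioi 0)) (nhds 0) :=
  noisy_iterates_stability_general Θ c₀ hc₀ hproper hsc A y S B hSsa hSB μ₀ μ₁ hμ₀ hμ₁ ξ x t hargmin
    ht hiter yδ ξδ xδ tδ hnoise hinit hargminδ htδ hiterδ
end
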